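/- Let F_1 and F_2 be two (-2)-classes in the Picard lattice of a degree-2 weak Del Pezzo surface with ⟨F_1, F_2⟩ = 0. Then there are exactly two (-1)-classes D with ⟨D, F_1⟩ = ⟨D, F_2⟩ = 1; these two classes D_1, D_2 satisfy ⟨D_1, D_2⟩ = 0 and D_1 + D_2 = -K - F_1 - F_2. -/
import Mathlib

/-- The intersection form of signature (1,7) on the Picard lattice `ℤ⁸`
of a degree-2 weak Del Pezzo surface. -/
def dpForm (x y : Fin 8 → ℤ) : ℤ :=
  x 0 * y 0 - ∑ i : Fin 7, x i.succ * y i.succ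

/-- The canonical class `K = (-3, 1, 1, 1, 1, 1, 1, 1)`. -/
def dpK : Fin 8 → ℤ := ![-3, 1, 1, 1, 1, 1, 1, 1]

/-- The basis classes `l i` (`l 0` the line class, `l i` the exceptional classes). -/
def l (i : Fin 8) : Fin 8 → ℤ := Pi.single i 1

/-- A `(-1)`-class: `D² = -1`, `⟨D, K⟩ = -1`, nonnegative leading coefficient. -/
def IsMinusOneClass (D : Fin 8 → ℤ) : Prop :=
  dpForm D D = -1 ∧ dpForm D dpK = -1 ∧ 0 ≤ D 0

/-- A `(-2)`-class: `F² = -2`, `⟨F, K⟩ = 0`, nonnegative leading coefficient. -/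
def IsMinusTwoClass (F : Fin 8 → ℤ) : Prop :=
  dpForm F F = -2 ∧ dpForm F dpK = 0 ∧ 0 ≤ F 0

/- ### Auxiliary machinery -/

lemma dpForm_expand (x y : Fin 8 → ℤ) :
    dpForm x y = x 0 * y 0 - (x 1 * y 1 + x 2 * y 2 + x 3 * y 3 + x 4 * y 4 +
      x 5 * y 5 + x 6 * y 6 + x 7 * y 7) := by
  show x 0 * y 0 - ∑ i : Fin 7, x i.succ * y i.succ = _
  rw [Fin.sum_univ_seven]
  rfl

lemma dpForm_K_expand (x : Fin 8 → ℤ) :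
    dpForm x dpK = -3 * x 0 - (x 1 + x 2 + x 3 + x 4 + x 5 + x 6 + x 7) := by
  rw [dpForm_expand]
  show x 0 * (-3) - (x 1 * 1 + x 2 * 1 + x 3 * 1 + x 4 * 1 + x 5 * 1 + x 6 * 1 + x 7 * 1) = _
  ring

lemma dpForm_comm (x y : Fin 8 → ℤ) : dpForm x y = dpForm y x := by
  simp only [dpForm_expand]; ring

lemma dpForm_add_left (x y z : Fin 8 → ℤ) :
    dpForm (x + y) z = dpForm x z + dpForm y z := by
  simp only [dpForm_expand, Pi.add_apply]; ring

lemma dpForm_add_right (x y z : Fin 8 → ℤ) :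
    dpForm x (y + z) = dpForm x y + dpForm x z := by
  simp only [dpForm_expand, Pi.add_apply]; ring

lemma dpForm_sub_left (x y z : Fin 8 → ℤ) :
    dpForm (x - y) z = dpForm x z - dpForm y z := by
  simp only [dpForm_expand, Pi.sub_apply]; ring

lemma dpForm_sub_right (x y z : Fin 8 → ℤ) :
    dpForm x (y - z) = dpForm x y - dpForm x z := by
  simp only [dpForm_expand, Pi.sub_apply]; ring

lemma dpForm_neg_left (x z : Fin 8 → ℤ) : dpForm (-x) z = -dpForm x z := by
  simp only [dpForm_expand, Pi.neg_apply]; ring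

lemma dpForm_neg_right (x z : Fin 8 → ℤ) : dpForm x (-z) = -dpForm x z := by
  simp only [dpForm_expand, Pi.neg_apply]; ring

lemma hKK : dpForm dpK dpK = 2 := by
  rw [dpForm_expand]
  show (-3 : ℤ) * (-3) - (1*1+1*1+1*1+1*1+1*1+1*1+1*1) = 2
  norm_num

lemma cs7 (x1 x2 x3 x4 x5 x6 x7 : ℤ) :
    (x1+x2+x3+x4+x5+x6+x7) * (x1+x2+x3+x4+x5+x6+x7) ≤
      7 * (x1*x1+x2*x2+x3*x3+x4*x4+x5*x5+x6*x6+x7*x7) := by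
  have key : 7 * (x1*x1+x2*x2+x3*x3+x4*x4+x5*x5+x6*x6+x7*x7) -
      (x1+x2+x3+x4+x5+x6+x7) * (x1+x2+x3+x4+x5+x6+x7) = (x1 - x2)^2 + (x1 - x3)^2 + (x1 - x4)^2 + (x1 - x5)^2 + (x1 - x6)^2 + (x1 - x7)^2 + (x2 - x3)^2 + (x2 - x4)^2 + (x2 - x5)^2 + (x2 - x6)^2 + (x2 - x7)^2 + (x3 - x4)^2 + (x3 - x5)^2 + (x3 - x6)^2 + (x3 - x7)^2 + (x4 - x5)^2 + (x4 - x6)^2 + (x4 - x7)^2 + (x5 - x6)^2 + (x5 - x7)^2 + (x6 - x7)^2 := by ring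
  have pos : (0:ℤ) ≤ (x1 - x2)^2 + (x1 - x3)^2 + (x1 - x4)^2 + (x1 - x5)^2 + (x1 - x6)^2 + (x1 - x7)^2 + (x2 - x3)^2 + (x2 - x4)^2 + (x2 - x5)^2 + (x2 - x6)^2 + (x2 - x7)^2 + (x3 - x4)^2 + (x3 - x5)^2 + (x3 - x6)^2 + (x3 - x7)^2 + (x4 - x5)^2 + (x4 - x6)^2 + (x4 - x7)^2 + (x5 - x6)^2 + (x5 - x7)^2 + (x6 - x7)^2 := by positivity
  linarith

lemma cs6 (x1 x2 x3 x4 x5 x6 : ℤ) :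
    (x1+x2+x3+x4+x5+x6) * (x1+x2+x3+x4+x5+x6) ≤
      6 * (x1*x1+x2*x2+x3*x3+x4*x4+x5*x5+x6*x6) := by
  have key : 6 * (x1*x1+x2*x2+x3*x3+x4*x4+x5*x5+x6*x6) -
      (x1+x2+x3+x4+x5+x6) * (x1+x2+x3+x4+x5+x6) = (x1 - x2)^2 + (x1 - x3)^2 + (x1 - x4)^2 + (x1 - x5)^2 + (x1 - x6)^2 + (x2 - x3)^2 + (x2 - x4)^2 + (x2 - x5)^2 + (x2 - x6)^2 + (x3 - x4)^2 + (x3 - x5)^2 + (x3 - x6)^2 + (x4 - x5)^2 + (x4 - x6)^2 + (x5 - x6)^2 := by ring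
  have pos : (0:ℤ) ≤ (x1 - x2)^2 + (x1 - x3)^2 + (x1 - x4)^2 + (x1 - x5)^2 + (x1 - x6)^2 + (x2 - x3)^2 + (x2 - x4)^2 + (x2 - x5)^2 + (x2 - x6)^2 + (x3 - x4)^2 + (x3 - x5)^2 + (x3 - x6)^2 + (x4 - x5)^2 + (x4 - x6)^2 + (x5 - x6)^2 := by positivity
  linarith

lemma headBound (a x1 x2 x3 x4 x5 x6 x7 : ℤ) (h0 : 0 ≤ a)
    (hsum : x1+x2+x3+x4+x5+x6+x7 = -3*a)
    (hsq : a*a - (x1*x1+x2*x2+x3*x3+x4*x4+x5*x5+x6*x6+x7*x7) = -2) : a ≤ 2 := by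
  have h9 : (x1+x2+x3+x4+x5+x6+x7) * (x1+x2+x3+x4+x5+x6+x7) = 9*(a*a) := by
    rw [hsum]; ring
  have hcs := cs7 x1 x2 x3 x4 x5 x6 x7
  by_contra hcon
  push_neg at hcon
  have h3 : 3 ≤ a := by omega
  nlinarith [mul_self_nonneg (a - 3)]

lemma coordAux (a x y1 y2 y3 y4 y5 y6 : ℤ)
    (hsum : y1+y2+y3+y4+y5+y6 = -3*a - x)
    (hsq : a*a - (x*x + (y1*y1+y2*y2+y3*y3+y4*y4+y5*y5+y6*y6)) = -2) :
    -1 ≤ x ∧ x ≤ 1 := by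
  have h9 : (y1+y2+y3+y4+y5+y6) * (y1+y2+y3+y4+y5+y6) = (3*a+x)*(3*a+x) := by
    rw [hsum]; ring
  have hcs := cs6 y1 y2 y3 y4 y5 y6
  have hb : x * x ≤ 3 := by nlinarith [mul_self_nonneg (a + x)]
  constructor <;> by_contra hcon <;> push_neg at hcon
  · have h2 : x ≤ -2 := by omega
    nlinarith [mul_self_nonneg (x + 2)]
  · have h2 : 2 ≤ x := by omega
    nlinarith [mul_self_nonneg (x - 2)]

lemma sq0 {x : ℤ} (h : x * x ≤ 0) : x = 0 :=
  mul_self_eq_zero.mp (le_antisymm h (mul_self_nonneg x))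

/-- Negative semidefiniteness of `dpForm` on the orthogonal complement of `K`. -/
lemma negdef_le (z : Fin 8 → ℤ) (hz : dpForm z dpK = 0) :
    7 * dpForm z z ≤ -2 * (z 0 * z 0) := by
  rw [dpForm_K_expand] at hz
  rw [dpForm_expand]
  have hs : z 1 + z 2 + z 3 + z 4 + z 5 + z 6 + z 7 = -3 * z 0 := by linarith
  have h9 : (z 1 + z 2 + z 3 + z 4 + z 5 + z 6 + z 7) *
      (z 1 + z 2 + z 3 + z 4 + z 5 + z 6 + z 7) = 9 * (z 0 * z 0) := by
    rw [hs]; ring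
  nlinarith [cs7 (z 1) (z 2) (z 3) (z 4) (z 5) (z 6) (z 7), h9]

/-- Definiteness: a vector orthogonal to `K` with zero self-intersection vanishes. -/
lemma negdef_zero (z : Fin 8 → ℤ) (hz : dpForm z dpK = 0) (h0 : dpForm z z = 0) :
    ∀ i, z i = 0 := by
  have hle := negdef_le z hz
  rw [h0] at hle
  have h00 : z 0 = 0 := sq0 (by linarith [mul_self_nonneg (z 0)])
  rw [dpForm_expand, h00] at h0
  have h1 : z 1 = 0 := sq0 (by nlinarith [mul_self_nonneg (z 2), mul_self_nonneg (z 3), mul_self_nonneg (z 4), mul_self_nonneg (z 5), mul_self_nonneg (z 6), mul_self_nonneg (z 7)])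
  have h2 : z 2 = 0 := sq0 (by nlinarith [mul_self_nonneg (z 1), mul_self_nonneg (z 3), mul_self_nonneg (z 4), mul_self_nonneg (z 5), mul_self_nonneg (z 6), mul_self_nonneg (z 7)])
  have h3 : z 3 = 0 := sq0 (by nlinarith [mul_self_nonneg (z 1), mul_self_nonneg (z 2), mul_self_nonneg (z 4), mul_self_nonneg (z 5), mul_self_nonneg (z 6), mul_self_nonneg (z 7)])
  have h4 : z 4 = 0 := sq0 (by nlinarith [mul_self_nonneg (z 1), mul_self_nonneg (z 2), mul_self_nonneg (z 3), mul_self_nonneg (z 5), mul_self_nonneg (z 6), mul_self_nonneg (z 7)])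
  have h5 : z 5 = 0 := sq0 (by nlinarith [mul_self_nonneg (z 1), mul_self_nonneg (z 2), mul_self_nonneg (z 3), mul_self_nonneg (z 4), mul_self_nonneg (z 6), mul_self_nonneg (z 7)])
  have h6 : z 6 = 0 := sq0 (by nlinarith [mul_self_nonneg (z 1), mul_self_nonneg (z 2), mul_self_nonneg (z 3), mul_self_nonneg (z 4), mul_self_nonneg (z 5), mul_self_nonneg (z 7)])
  have h7 : z 7 = 0 := sq0 (by nlinarith [mul_self_nonneg (z 1), mul_self_nonneg (z 2), mul_self_nonneg (z 3), mul_self_nonneg (z 4), mul_self_nonneg (z 5), mul_self_nonneg (z 6)])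
  intro i
  fin_cases i <;> assumption

/-- A `(-1)`-class automatically has nonnegative leading coefficient. -/
lemma nonneg0 (D : Fin 8 → ℤ) (h1 : dpForm D D = -1) (h2 : dpForm D dpK = -1) :
    0 ≤ D 0 := by
  have hKD : dpForm dpK D = -1 := by rw [dpForm_comm]; exact h2
  have hwK : dpForm (D + D + dpK) dpK = 0 := by
    simp only [dpForm_add_left]; linarith [hKK]
  have hww : dpForm (D + D + dpK) (D + D + dpK) = -6 := by
    simp only [dpForm_add_left, dpForm_add_right]; linarith [hKK]
  have h := negdef_le _ hwK
  rw [hww] at h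
  have hw0 : (D + D + dpK) 0 = D 0 + D 0 + (-3) := rfl
  rw [hw0] at h
  by_contra hc
  push_neg at hc
  have hm : D 0 ≤ -1 := by omega
  nlinarith [mul_self_nonneg (-1 - D 0)]

/- ### Lists of classes and the finite computations -/

def qf (a b : List ℤ) : ℤ :=
  a.getD 0 0 * b.getD 0 0 - (a.getD 1 0 * b.getD 1 0 + a.getD 2 0 * b.getD 2 0 +
    a.getD 3 0 * b.getD 3 0 + a.getD 4 0 * b.getD 4 0 + a.getD 5 0 * b.getD 5 0 +
    a.getD 6 0 * b.getD 6 0 + a.getD 7 0 * b.getD 7 0)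

def KL : List ℤ := [-3, 1, 1, 1, 1, 1, 1, 1]

def toFn (L : List ℤ) : Fin 8 → ℤ := fun i => L.getD i.val 0

def toList (F : Fin 8 → ℤ) : List ℤ := [F 0, F 1, F 2, F 3, F 4, F 5, F 6, F 7]

def tvN (a b c d e f g h : ℕ) : List ℤ :=
  [(a : ℤ), (b : ℤ) - 1, (c : ℤ) - 1, (d : ℤ) - 1, (e : ℤ) - 1, (f : ℤ) - 1,
    (g : ℤ) - 1, (h : ℤ) - 1]

lemma dpForm_qf (F G : Fin 8 → ℤ) : dpForm F G = qf (toList F) (toList G) := by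
  rw [dpForm_expand]; rfl

lemma dpForm_qfK (F : Fin 8 → ℤ) : dpForm F dpK = qf (toList F) KL := by
  rw [dpForm_expand]; rfl

lemma dpForm_toFn (a b : List ℤ) : dpForm (toFn a) (toFn b) = qf a b := by
  rw [dpForm_expand]; rfl

lemma dpForm_toFn_left (d : List ℤ) (F : Fin 8 → ℤ) :
    dpForm (toFn d) F = qf d (toList F) := by
  rw [dpForm_expand]; rfl

lemma dpForm_toFn_K (d : List ℤ) : dpForm (toFn d) dpK = qf d KL := by
  rw [dpForm_expand]; rfl
def L56 : List (List ℤ) := [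
  [0, 1, 0, 0, 0, 0, 0, 0],
  [0, 0, 1, 0, 0, 0, 0, 0],
  [0, 0, 0, 1, 0, 0, 0, 0],
  [0, 0, 0, 0, 1, 0, 0, 0],
  [0, 0, 0, 0, 0, 1, 0, 0],
  [0, 0, 0, 0, 0, 0, 1, 0],
  [0, 0, 0, 0, 0, 0, 0, 1],
  [1, -1, -1, 0, 0, 0, 0, 0],
  [1, -1, 0, -1, 0, 0, 0, 0],
  [1, -1, 0, 0, -1, 0, 0, 0],
  [1, -1, 0, 0, 0, -1, 0, 0],
  [1, -1, 0, 0, 0, 0, -1, 0],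
  [1, -1, 0, 0, 0, 0, 0, -1],
  [1, 0, -1, -1, 0, 0, 0, 0],
  [1, 0, -1, 0, -1, 0, 0, 0],
  [1, 0, -1, 0, 0, -1, 0, 0],
  [1, 0, -1, 0, 0, 0, -1, 0],
  [1, 0, -1, 0, 0, 0, 0, -1],
  [1, 0, 0, -1, -1, 0, 0, 0],
  [1, 0, 0, -1, 0, -1, 0, 0],
  [1, 0, 0, -1, 0, 0, -1, 0],
  [1, 0, 0, -1, 0, 0, 0, -1],
  [1, 0, 0, 0, -1, -1, 0, 0],
  [1, 0, 0, 0, -1, 0, -1, 0],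
  [1, 0, 0, 0, -1, 0, 0, -1],
  [1, 0, 0, 0, 0, -1, -1, 0],
  [1, 0, 0, 0, 0, -1, 0, -1],
  [1, 0, 0, 0, 0, 0, -1, -1],
  [2, 0, 0, -1, -1, -1, -1, -1],
  [2, 0, -1, 0, -1, -1, -1, -1],
  [2, 0, -1, -1, 0, -1, -1, -1],
  [2, 0, -1, -1, -1, 0, -1, -1],
  [2, 0, -1, -1, -1, -1, 0, -1],
  [2, 0, -1, -1, -1, -1, -1, 0],
  [2, -1, 0, 0, -1, -1, -1, -1],
  [2, -1, 0, -1, 0, -1, -1, -1],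
  [2, -1, 0, -1, -1, 0, -1, -1],
  [2, -1, 0, -1, -1, -1, 0, -1],
  [2, -1, 0, -1, -1, -1, -1, 0],
  [2, -1, -1, 0, 0, -1, -1, -1],
  [2, -1, -1, 0, -1, 0, -1, -1],
  [2, -1, -1, 0, -1, -1, 0, -1],
  [2, -1, -1, 0, -1, -1, -1, 0],
  [2, -1, -1, -1, 0, 0, -1, -1],
  [2, -1, -1, -1, 0, -1, 0, -1],
  [2, -1, -1, -1, 0, -1, -1, 0],
  [2, -1, -1, -1, -1, 0, 0, -1],
  [2, -1, -1, -1, -1, 0, -1, 0],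
  [2, -1, -1, -1, -1, -1, 0, 0],
  [3, -2, -1, -1, -1, -1, -1, -1],
  [3, -1, -2, -1, -1, -1, -1, -1],
  [3, -1, -1, -2, -1, -1, -1, -1],
  [3, -1, -1, -1, -2, -1, -1, -1],
  [3, -1, -1, -1, -1, -2, -1, -1],
  [3, -1, -1, -1, -1, -1, -2, -1],
  [3, -1, -1, -1, -1, -1, -1, -2]]

def L84 : List (List ℤ) := [
  [0, 1, -1, 0, 0, 0, 0, 0],
  [0, 1, 0, -1, 0, 0, 0, 0],
  [0, 1, 0, 0, -1, 0, 0, 0],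
  [0, 1, 0, 0, 0, -1, 0, 0],
  [0, 1, 0, 0, 0, 0, -1, 0],
  [0, 1, 0, 0, 0, 0, 0, -1],
  [0, -1, 1, 0, 0, 0, 0, 0],
  [0, 0, 1, -1, 0, 0, 0, 0],
  [0, 0, 1, 0, -1, 0, 0, 0],
  [0, 0, 1, 0, 0, -1, 0, 0],
  [0, 0, 1, 0, 0, 0, -1, 0],
  [0, 0, 1, 0, 0, 0, 0, -1],
  [0, -1, 0, 1, 0, 0, 0, 0],
  [0, 0, -1, 1, 0, 0, 0, 0],
  [0, 0, 0, 1, -1, 0, 0, 0],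
  [0, 0, 0, 1, 0, -1, 0, 0],
  [0, 0, 0, 1, 0, 0, -1, 0],
  [0, 0, 0, 1, 0, 0, 0, -1],
  [0, -1, 0, 0, 1, 0, 0, 0],
  [0, 0, -1, 0, 1, 0, 0, 0],
  [0, 0, 0, -1, 1, 0, 0, 0],
  [0, 0, 0, 0, 1, -1, 0, 0],
  [0, 0, 0, 0, 1, 0, -1, 0],
  [0, 0, 0, 0, 1, 0, 0, -1],
  [0, -1, 0, 0, 0, 1, 0, 0],
  [0, 0, -1, 0, 0, 1, 0, 0],
  [0, 0, 0, -1, 0, 1, 0, 0],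
  [0, 0, 0, 0, -1, 1, 0, 0],
  [0, 0, 0, 0, 0, 1, -1, 0],
  [0, 0, 0, 0, 0, 1, 0, -1],
  [0, -1, 0, 0, 0, 0, 1, 0],
  [0, 0, -1, 0, 0, 0, 1, 0],
  [0, 0, 0, -1, 0, 0, 1, 0],
  [0, 0, 0, 0, -1, 0, 1, 0],
  [0, 0, 0, 0, 0, -1, 1, 0],
  [0, 0, 0, 0, 0, 0, 1, -1],
  [0, -1, 0, 0, 0, 0, 0, 1],
  [0, 0, -1, 0, 0, 0, 0, 1],
  [0, 0, 0, -1, 0, 0, 0, 1],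
  [0, 0, 0, 0, -1, 0, 0, 1],
  [0, 0, 0, 0, 0, -1, 0, 1],
  [0, 0, 0, 0, 0, 0, -1, 1],
  [1, -1, -1, -1, 0, 0, 0, 0],
  [1, -1, -1, 0, -1, 0, 0, 0],
  [1, -1, -1, 0, 0, -1, 0, 0],
  [1, -1, -1, 0, 0, 0, -1, 0],
  [1, -1, -1, 0, 0, 0, 0, -1],
  [1, -1, 0, -1, -1, 0, 0, 0],
  [1, -1, 0, -1, 0, -1, 0, 0],
  [1, -1, 0, -1, 0, 0, -1, 0],
  [1, -1, 0, -1, 0, 0, 0, -1],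
  [1, -1, 0, 0, -1, -1, 0, 0],
  [1, -1, 0, 0, -1, 0, -1, 0],
  [1, -1, 0, 0, -1, 0, 0, -1],
  [1, -1, 0, 0, 0, -1, -1, 0],
  [1, -1, 0, 0, 0, -1, 0, -1],
  [1, -1, 0, 0, 0, 0, -1, -1],
  [1, 0, -1, -1, -1, 0, 0, 0],
  [1, 0, -1, -1, 0, -1, 0, 0],
  [1, 0, -1, -1, 0, 0, -1, 0],
  [1, 0, -1, -1, 0, 0, 0, -1],
  [1, 0, -1, 0, -1, -1, 0, 0],
  [1, 0, -1, 0, -1, 0, -1, 0],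
  [1, 0, -1, 0, -1, 0, 0, -1],
  [1, 0, -1, 0, 0, -1, -1, 0],
  [1, 0, -1, 0, 0, -1, 0, -1],
  [1, 0, -1, 0, 0, 0, -1, -1],
  [1, 0, 0, -1, -1, -1, 0, 0],
  [1, 0, 0, -1, -1, 0, -1, 0],
  [1, 0, 0, -1, -1, 0, 0, -1],
  [1, 0, 0, -1, 0, -1, -1, 0],
  [1, 0, 0, -1, 0, -1, 0, -1],
  [1, 0, 0, -1, 0, 0, -1, -1],
  [1, 0, 0, 0, -1, -1, -1, 0],
  [1, 0, 0, 0, -1, -1, 0, -1],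
  [1, 0, 0, 0, -1, 0, -1, -1],
  [1, 0, 0, 0, 0, -1, -1, -1],
  [2, 0, -1, -1, -1, -1, -1, -1],
  [2, -1, 0, -1, -1, -1, -1, -1],
  [2, -1, -1, 0, -1, -1, -1, -1],
  [2, -1, -1, -1, 0, -1, -1, -1],
  [2, -1, -1, -1, -1, 0, -1, -1],
  [2, -1, -1, -1, -1, -1, 0, -1],
  [2, -1, -1, -1, -1, -1, -1, 0]]

lemma lem56 : ∀ d ∈ L56, qf d d = -1 ∧ qf d KL = -1 ∧ 0 ≤ d.getD 0 0 := by decide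

set_option maxRecDepth 100000 in
set_option maxHeartbeats 4000000 in
lemma lemExist : ∀ a ∈ L84, ∀ b ∈ L84, qf a b = 0 →
    ∃ d ∈ L56, qf d a = 1 ∧ qf d b = 1 := by decide

set_option maxRecDepth 100000 in
set_option maxHeartbeats 4000000 in
lemma lemClassAux : ∀ (a : Fin 3) (b c d e f g h : Fin 3),
    qf (tvN a.val b.val c.val d.val e.val f.val g.val h.val)
       (tvN a.val b.val c.val d.val e.val f.val g.val h.val) = -2 →
    qf (tvN a.val b.val c.val d.val e.val f.val g.val h.val) KL = 0 →
    tvN a.val b.val c.val d.val e.val f.val g.val h.val ∈ L84 := by decide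

lemma lemClass (a b c d e f g h : ℕ) (ha : a < 3) (hb : b < 3) (hc : c < 3)
    (hd : d < 3) (he : e < 3) (hf : f < 3) (hg : g < 3) (hh : h < 3)
    (h1 : qf (tvN a b c d e f g h) (tvN a b c d e f g h) = -2)
    (h2 : qf (tvN a b c d e f g h) KL = 0) : tvN a b c d e f g h ∈ L84 :=
  lemClassAux ⟨a, ha⟩ ⟨b, hb⟩ ⟨c, hc⟩ ⟨d, hd⟩ ⟨e, he⟩ ⟨f, hf⟩ ⟨g, hg⟩ ⟨h, hh⟩ h1 h2

/- ### Classification of `(-2)`-classes -/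

lemma minusTwo_mem (F : Fin 8 → ℤ) (hF : IsMinusTwoClass F) : toList F ∈ L84 := by
  obtain ⟨h1', h2', h0⟩ := hF
  have h1 := h1'
  have h2 := h2'
  rw [dpForm_expand] at h1
  rw [dpForm_K_expand] at h2
  have ha2 : F 0 ≤ 2 :=
    headBound (F 0) (F 1) (F 2) (F 3) (F 4) (F 5) (F 6) (F 7) h0
      (by linarith) (by linarith)
  have hc1 : -1 ≤ F 1 ∧ F 1 ≤ 1 :=
    coordAux (F 0) (F 1) (F 2) (F 3) (F 4) (F 5) (F 6) (F 7) (by linarith) (by linarith)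
  have hc2 : -1 ≤ F 2 ∧ F 2 ≤ 1 :=
    coordAux (F 0) (F 2) (F 1) (F 3) (F 4) (F 5) (F 6) (F 7) (by linarith) (by linarith)
  have hc3 : -1 ≤ F 3 ∧ F 3 ≤ 1 :=
    coordAux (F 0) (F 3) (F 1) (F 2) (F 4) (F 5) (F 6) (F 7) (by linarith) (by linarith)
  have hc4 : -1 ≤ F 4 ∧ F 4 ≤ 1 :=
    coordAux (F 0) (F 4) (F 1) (F 2) (F 3) (F 5) (F 6) (F 7) (by linarith) (by linarith)
  have hc5 : -1 ≤ F 5 ∧ F 5 ≤ 1 :=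
    coordAux (F 0) (F 5) (F 1) (F 2) (F 3) (F 4) (F 6) (F 7) (by linarith) (by linarith)
  have hc6 : -1 ≤ F 6 ∧ F 6 ≤ 1 :=
    coordAux (F 0) (F 6) (F 1) (F 2) (F 3) (F 4) (F 5) (F 7) (by linarith) (by linarith)
  have hc7 : -1 ≤ F 7 ∧ F 7 ≤ 1 :=
    coordAux (F 0) (F 7) (F 1) (F 2) (F 3) (F 4) (F 5) (F 6) (by linarith) (by linarith)
  have hlist : tvN (F 0).toNat (F 1 + 1).toNat (F 2 + 1).toNat (F 3 + 1).toNat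
      (F 4 + 1).toNat (F 5 + 1).toNat (F 6 + 1).toNat (F 7 + 1).toNat = toList F := by
    have e0 : ((F 0).toNat : ℤ) = F 0 := by omega
    have e1 : (((F 1 + 1).toNat : ℕ) : ℤ) - 1 = F 1 := by omega
    have e2 : (((F 2 + 1).toNat : ℕ) : ℤ) - 1 = F 2 := by omega
    have e3 : (((F 3 + 1).toNat : ℕ) : ℤ) - 1 = F 3 := by omega
    have e4 : (((F 4 + 1).toNat : ℕ) : ℤ) - 1 = F 4 := by omega
    have e5 : (((F 5 + 1).toNat : ℕ) : ℤ) - 1 = F 5 := by omega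
    have e6 : (((F 6 + 1).toNat : ℕ) : ℤ) - 1 = F 6 := by omega
    have e7 : (((F 7 + 1).toNat : ℕ) : ℤ) - 1 = F 7 := by omega
    simp only [tvN, toList]
    rw [e0, e1, e2, e3, e4, e5, e6, e7]
  have key := lemClass (F 0).toNat (F 1 + 1).toNat (F 2 + 1).toNat (F 3 + 1).toNat
      (F 4 + 1).toNat (F 5 + 1).toNat (F 6 + 1).toNat (F 7 + 1).toNat
      (by omega) (by omega) (by omega) (by omega) (by omega) (by omega) (by omega) (by omega)
      (by rw [hlist, ← dpForm_qf]; exact h1')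
      (by rw [hlist, ← dpForm_qfK]; exact h2')
  rwa [hlist] at key

/- ### Main theorem -/

/-- For two orthogonal `(-2)`-classes `F₁, F₂` there are exactly two `(-1)`-classes
`D` with `⟨D,F₁⟩ = ⟨D,F₂⟩ = 1`; these two classes `D₁, D₂` satisfy
`⟨D₁,D₂⟩ = 0` and `D₁ + D₂ = -K - F₁ - F₂`. -/
theorem two_minusOneClasses_through_orthogonal_pair (F1 F2 : Fin 8 → ℤ)
    (hF1 : IsMinusTwoClass F1) (hF2 : IsMinusTwoClass F2)
    (horth : dpForm F1 F2 = 0) :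
    ∃ D1 D2 : Fin 8 → ℤ, D1 ≠ D2 ∧
      IsMinusOneClass D1 ∧ IsMinusOneClass D2 ∧
      dpForm D1 F1 = 1 ∧ dpForm D1 F2 = 1 ∧
      dpForm D2 F1 = 1 ∧ dpForm D2 F2 = 1 ∧
      (∀ D : Fin 8 → ℤ, IsMinusOneClass D → dpForm D F1 = 1 → dpForm D F2 = 1 →
        D = D1 ∨ D = D2) ∧
      dpForm D1 D2 = 0 ∧ D1 + D2 = -dpK - F1 - F2 := by
  -- the two distinguished classes
  obtain ⟨d, hd56, hqa, hqb⟩ := lemExist (toList F1) (minusTwo_mem F1 hF1)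
      (toList F2) (minusTwo_mem F2 hF2) (by rw [← dpForm_qf]; exact horth)
  obtain ⟨hdd, hdK, hd0⟩ := lem56 d hd56
  set D1 : Fin 8 → ℤ := toFn d with hD1def
  set D2 : Fin 8 → ℤ := -dpK - F1 - F2 - D1 with hD2def
  -- basic values
  have hF1F1 : dpForm F1 F1 = -2 := hF1.1
  have hF2F2 : dpForm F2 F2 = -2 := hF2.1
  have hF1K : dpForm F1 dpK = 0 := hF1.2.1
  have hF2K : dpForm F2 dpK = 0 := hF2.2.1
  have hKF1 : dpForm dpK F1 = 0 := by rw [dpForm_comm]; exact hF1K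
  have hKF2 : dpForm dpK F2 = 0 := by rw [dpForm_comm]; exact hF2K
  have hF2F1 : dpForm F2 F1 = 0 := by rw [dpForm_comm]; exact horth
  have hD1D1 : dpForm D1 D1 = -1 := by rw [hD1def, dpForm_toFn]; exact hdd
  have hD1K : dpForm D1 dpK = -1 := by rw [hD1def, dpForm_toFn_K]; exact hdK
  have hKD1 : dpForm dpK D1 = -1 := by rw [dpForm_comm]; exact hD1K
  have hD1F1 : dpForm D1 F1 = 1 := by rw [hD1def, dpForm_toFn_left]; exact hqa
  have hD1F2 : dpForm D1 F2 = 1 := by rw [hD1def, dpForm_toFn_left]; exact hqb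
  have hF1D1 : dpForm F1 D1 = 1 := by rw [dpForm_comm]; exact hD1F1
  have hF2D1 : dpForm F2 D1 = 1 := by rw [dpForm_comm]; exact hD1F2
  have hD1_0 : 0 ≤ D1 0 := hd0
  clear hd56 hqa hqb hdd hdK hd0
  -- values for D2
  have hD2F1 : dpForm D2 F1 = 1 := by
    rw [hD2def]
    simp only [dpForm_sub_left, dpForm_neg_left]
    linarith
  have hD2F2 : dpForm D2 F2 = 1 := by
    rw [hD2def]
    simp only [dpForm_sub_left, dpForm_neg_left]
    linarith
  have hD2D2 : dpForm D2 D2 = -1 := by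
    rw [hD2def]
    simp only [dpForm_sub_left, dpForm_neg_left, dpForm_sub_right, dpForm_neg_right]
    linarith [hKK]
  have hD2K : dpForm D2 dpK = -1 := by
    rw [hD2def]
    simp only [dpForm_sub_left, dpForm_neg_left]
    linarith [hKK]
  have hD1D2 : dpForm D1 D2 = 0 := by
    rw [hD2def]
    simp only [dpForm_sub_right, dpForm_neg_right]
    linarith
  have hD2_0 : 0 ≤ D2 0 := nonneg0 D2 hD2D2 hD2K
  have hne : D1 ≠ D2 := by
    intro h
    rw [h] at hD1D2
    rw [hD2D2] at hD1D2
    exact absurd hD1D2 (by norm_num)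
  refine ⟨D1, D2, hne, ⟨hD1D1, hD1K, hD1_0⟩, ⟨hD2D2, hD2K, hD2_0⟩,
    hD1F1, hD1F2, hD2F1, hD2F2, ?_, hD1D2, ?_⟩
  · -- uniqueness
    intro D hD hDF1 hDF2
    obtain ⟨hDD, hDK, _⟩ := hD
    have hKD : dpForm dpK D = -1 := by rw [dpForm_comm]; exact hDK
    have hF1D : dpForm F1 D = 1 := by rw [dpForm_comm]; exact hDF1
    have hF2D : dpForm F2 D = 1 := by rw [dpForm_comm]; exact hDF2
    set c : ℤ := dpForm D D1 with hcdef
    have hD1D : dpForm D1 D = c := by rw [dpForm_comm]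
    -- z = D - D1
    have hzK : dpForm (D - D1) dpK = 0 := by
      simp only [dpForm_sub_left]; linarith
    have hzz : dpForm (D - D1) (D - D1) = -2 - 2 * c := by
      simp only [dpForm_sub_left, dpForm_sub_right]; linarith
    -- t = D + D1 + K + F1 + F2
    have htK : dpForm (D + D1 + dpK + F1 + F2) dpK = 0 := by
      simp only [dpForm_add_left]; linarith [hKK]
    have htt : dpForm (D + D1 + dpK + F1 + F2) (D + D1 + dpK + F1 + F2) = 2 * c := by
      simp only [dpForm_add_left, dpForm_add_right]; linarith [hKK]
    have hz2 : dpForm (D - D1) (D - D1) ≤ 0 := by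
      linarith [negdef_le (D - D1) hzK, mul_self_nonneg ((D - D1) 0)]
    have ht2 : dpForm (D + D1 + dpK + F1 + F2) (D + D1 + dpK + F1 + F2) ≤ 0 := by
      linarith [negdef_le (D + D1 + dpK + F1 + F2) htK,
        mul_self_nonneg ((D + D1 + dpK + F1 + F2) 0)]
    have hcases : c = -1 ∨ c = 0 := by
      rw [hzz] at hz2; rw [htt] at ht2; omega
    rcases hcases with hc | hc
    · left
      have hzero := negdef_zero (D - D1) hzK (by rw [hzz, hc]; ring)
      funext i
      have := hzero i
      rw [Pi.sub_apply] at this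
      linarith
    · right
      have hzero := negdef_zero (D + D1 + dpK + F1 + F2) htK (by rw [htt, hc]; ring)
      funext i
      have ht0 := hzero i
      simp only [Pi.add_apply] at ht0
      rw [hD2def]
      simp only [Pi.sub_apply, Pi.neg_apply]
      linarith
  · -- sum identity
    rw [hD2def]
    funext i
    simp only [Pi.add_apply, Pi.sub_apply, Pi.neg_apply]
    ring
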